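/- In a Kripke model for intuitionistic logic, let φ be a formula, T a set of subformulas of φ, and α a node such that: (i) for each atom x, α ⊩ x iff x ∈ T, (ii) every node strictly above α forces every implication ρ → χ ∈ T, and (iii) T is closed under modus ponens for implications in Subform(φ) (if ρ → χ ∈ T and ρ ∈ T then χ ∈ T) and respects ∧ and ∨ (ρ ∧ χ ∈ T iff ρ, χ ∈ T; ρ ∨ χ ∈ T iff ρ ∈ T or χ ∈ T), and every node strictly above α forces exactly the formulas in some superset of T with each implication in T forced. Then if additionally each implication ρ → χ ∈ Subform(φ) ∖ T fails at some node ≥ α, we conclude α ⊩ ψ iff ψ ∈ T for every ψ ∈ Subform(φ). -/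
import Mathlib


/-- Propositional formulas with atoms in `α`. -/
inductive PropForm (α : Type) : Type
  | var : α → PropForm α
  | bot : PropForm α
  | conj : PropForm α → PropForm α → PropForm α
  | disj : PropForm α → PropForm α → PropForm α
  | impl : PropForm α → PropForm α → PropForm α
  deriving DecidableEq

/-- Kripke forcing over a preordered set of worlds `W` with atomic valuation
`val` (standard clauses for intuitionistic propositional logic). -/
def Force {W α : Type} [Preorder W] (val : W → α → Prop) :
    W → PropForm α → Prop
  | w, .var a => val w a
  | _, .bot => False
  | w, .conj p q => Force val w p ∧ Force val w q
  | w, .disj p q => Force val w p ∨ Force val w q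
  | w, .impl p q => ∀ w', w ≤ w' → Force val w' p → Force val w' q

/-- The atomic valuation is monotone. -/
def MonoVal {W α : Type} [Preorder W] (val : W → α → Prop) : Prop :=
  ∀ a : α, ∀ w w' : W, w ≤ w' → val w a → val w' a

/-- The set of subformulas of a formula. -/
def Subform {α : Type} [DecidableEq α] : PropForm α → Finset (PropForm α)
  | .var a => {PropForm.var a}
  | .bot => {PropForm.bot}
  | .conj p q => insert (PropForm.conj p q) (Subform p ∪ Subform q)
  | .disj p q => insert (PropForm.disj p q) (Subform p ∪ Subform q)
  | .impl p q => insert (PropForm.impl p q) (Subform p ∪ Subform q)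

theorem mem_Subform_self {α : Type} [DecidableEq α] (ψ : PropForm α) :
    ψ ∈ Subform ψ := by
  cases ψ <;> simp [Subform]

theorem Subform_trans {α : Type} [DecidableEq α] {τ ψ : PropForm α} :
    ∀ φ : PropForm α, ψ ∈ Subform φ → τ ∈ Subform ψ → τ ∈ Subform φ := by
  intro φ
  induction φ with
  | var a => intro h1 h2; simp [Subform] at h1; subst h1; exact h2
  | bot => intro h1 h2; simp [Subform] at h1; subst h1; exact h2
  | conj p q ihp ihq =>
    intro h1 h2
    simp [Subform] at h1 ⊢
    rcases h1 with h1 | h1 | h1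
    · subst h1; simpa [Subform] using h2
    · exact Or.inr (Or.inl (ihp h1 h2))
    · exact Or.inr (Or.inr (ihq h1 h2))
  | disj p q ihp ihq =>
    intro h1 h2
    simp [Subform] at h1 ⊢
    rcases h1 with h1 | h1 | h1
    · subst h1; simpa [Subform] using h2
    · exact Or.inr (Or.inl (ihp h1 h2))
    · exact Or.inr (Or.inr (ihq h1 h2))
  | impl p q ihp ihq =>
    intro h1 h2
    simp [Subform] at h1 ⊢
    rcases h1 with h1 | h1 | h1
    · subst h1; simpa [Subform] using h2
    · exact Or.inr (Or.inl (ihp h1 h2))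
    · exact Or.inr (Or.inr (ihq h1 h2))

/-- The inductive core of Lemma `hypfails`: let `T` be a set of subformulas of
`φ` and `α₀` a node such that (i) `α₀` forces exactly the atoms in `T`;
(ii) every node strictly above `α₀` forces every implication in `T` and indeed
everything in `T`; (iii) `T` is closed under modus ponens and respects `∧` and
`∨` on subformulas of `φ`; and (iv) every implication in `Subform φ ∖ T` fails
at some node `≥ α₀`.  Then `α₀` forces exactly the subformulas of `φ` in `T`. -/
theorem stmt_19 {W α : Type} [DecidableEq α] [PartialOrder W]
    (val : W → α → Prop) (hmono : MonoVal val)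
    (φ : PropForm α) (α₀ : W) (T : Set (PropForm α))
    (hTsub : T ⊆ ↑(Subform φ))
    -- (i) atoms
    (hatom : ∀ a : α, PropForm.var a ∈ Subform φ →
      (Force val α₀ (PropForm.var a) ↔ PropForm.var a ∈ T))
    (hbotT : PropForm.bot ∉ T)
    -- (ii) every node strictly above `α₀` forces everything in `T`
    (habove : ∀ β : W, α₀ < β → ∀ ψ ∈ T, Force val β ψ)
    -- (iii) closure properties of `T`
    (hmp : ∀ ρ χ : PropForm α, PropForm.impl ρ χ ∈ T → ρ ∈ T → χ ∈ T)
    (hconj : ∀ ρ χ : PropForm α, PropForm.conj ρ χ ∈ Subform φ →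
      (PropForm.conj ρ χ ∈ T ↔ ρ ∈ T ∧ χ ∈ T))
    (hdisj : ∀ ρ χ : PropForm α, PropForm.disj ρ χ ∈ Subform φ →
      (PropForm.disj ρ χ ∈ T ↔ ρ ∈ T ∨ χ ∈ T))
    -- (iv) implications outside `T` fail at some node above `α₀`
    (hfail : ∀ ρ χ : PropForm α, PropForm.impl ρ χ ∈ Subform φ →
      PropForm.impl ρ χ ∉ T →
      ∃ β : W, α₀ ≤ β ∧ Force val β ρ ∧ ¬ Force val β χ) :
    ∀ ψ ∈ Subform φ, Force val α₀ ψ ↔ ψ ∈ T := by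
  intro ψ
  induction ψ with
  | var a => exact hatom a
  | bot =>
    intro _
    constructor
    · intro h; exact absurd h (by simp [Force])
    · intro h; exact absurd h hbotT
  | conj p q ihp ihq =>
    intro hmem
    have hp : p ∈ Subform φ :=
      Subform_trans φ hmem (by simp [Subform, mem_Subform_self])
    have hq : q ∈ Subform φ :=
      Subform_trans φ hmem (by simp [Subform, mem_Subform_self])
    rw [show Force val α₀ (PropForm.conj p q) ↔
        Force val α₀ p ∧ Force val α₀ q from Iff.rfl,
      ihp hp, ihq hq, hconj p q hmem]
  | disj p q ihp ihq =>
    intro hmem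
    have hp : p ∈ Subform φ :=
      Subform_trans φ hmem (by simp [Subform, mem_Subform_self])
    have hq : q ∈ Subform φ :=
      Subform_trans φ hmem (by simp [Subform, mem_Subform_self])
    rw [show Force val α₀ (PropForm.disj p q) ↔
        Force val α₀ p ∨ Force val α₀ q from Iff.rfl,
      ihp hp, ihq hq, hdisj p q hmem]
  | impl p q ihp ihq =>
    intro hmem
    have hp : p ∈ Subform φ :=
      Subform_trans φ hmem (by simp [Subform, mem_Subform_self])
    have hq : q ∈ Subform φ :=
      Subform_trans φ hmem (by simp [Subform, mem_Subform_self])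
    constructor
    · intro hF
      by_contra hnT
      obtain ⟨β, hβ, hFp, hFq⟩ := hfail p q hmem hnT
      exact hFq (hF β hβ hFp)
    · intro hT w' hw hFp
      rcases eq_or_lt_of_le hw with rfl | hlt
      · exact (ihq hq).mpr (hmp p q hT ((ihp hp).mp hFp))
      · exact habove w' hlt _ hT w' le_rfl hFp
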